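/- Price of anarchy bound: assume c_P ≥ ΔL·τ where ΔL = L_U − L_P. Let x* be any Nash equilibrium and y* the social optimum. Then SC(x*)/SC(y*) ≤ 1 + d_avg·e_max, where d_avg = Σ_d d·m_d / Σ_d m_d, and e_max = β_IA·p_U·Σ_{k=0}^{K−1} ((β_IA·p_U/d_avg)·Σ_d d(d−1)·m_d / Σ_d m_d)^k is the exposure when no population protects. -/

import Mathlib

open Finset

/-- The three actions: Protection, No action, Insurance. -/
inductive Act | P | N | I
deriving DecidableEq

/-- `𝒟 = {1, …, D_max}`. -/
def Dset (Dmax : ℕ) : Finset ℕ := Finset.Icc 1 Dmax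

/-- Weighted degree distribution `w_d = d·m_d / ∑ d'·m_{d'}`. -/
noncomputable def wgt (Dmax : ℕ) (m : ℕ → ℝ) (d : ℕ) : ℝ :=
  (d : ℝ) * m d / ∑ d' ∈ Dset Dmax, (d' : ℝ) * m d'

/-- `γ(x) = β_IA · ∑_d w_d (g_{d,P} p_P + (1 − g_{d,P}) p_U)`, where
`g_{d,P} = x_{d,P}/m_d`. -/
noncomputable def gam (Dmax : ℕ) (m : ℕ → ℝ) (pP pU βIA : ℝ) (xP : ℕ → ℝ) : ℝ :=
  βIA * ∑ d ∈ Dset Dmax, wgt Dmax m d * ((xP d / m d) * pP + (1 - xP d / m d) * pU)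

/-- `λ(x) = β_IA · ∑_d w_d (d−1) (g_{d,P} p_P + (1 − g_{d,P}) p_U)`. -/
noncomputable def lamb (Dmax : ℕ) (m : ℕ → ℝ) (pP pU βIA : ℝ) (xP : ℕ → ℝ) : ℝ :=
  βIA * ∑ d ∈ Dset Dmax,
    wgt Dmax m d * ((d : ℝ) - 1) * ((xP d / m d) * pP + (1 - xP d / m d) * pU)

/-- Risk exposure `e(x) = γ(x) · ∑_{k=1}^{K} λ(x)^{k−1}`. -/
noncomputable def expo (Dmax : ℕ) (m : ℕ → ℝ) (pP pU βIA : ℝ) (K : ℕ)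
    (xP : ℕ → ℝ) : ℝ :=
  gam Dmax m pP pU βIA xP * ∑ k ∈ Finset.range K, lamb Dmax m pP pU βIA xP ^ k

/-- Cost of a degree-`d` node playing action `a` at a social state with protected
masses `xP`:  `C_{d,P} = τ(1 + d·e)L_P + c_P`, `C_{d,N} = τ(1 + d·e)L_U`,
`C_{d,I} = C_{d,N} + c_I − min(Cov_max, ξ·max(0, C_{d,N} − ded))`. -/
noncomputable def cost (Dmax : ℕ) (m : ℕ → ℝ) (pP pU βIA τ LP LU cP cI ξ ded Cov : ℝ)
    (K : ℕ) (xP : ℕ → ℝ) (d : ℕ) : Act → ℝ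
  | Act.P => τ * (1 + (d : ℝ) * expo Dmax m pP pU βIA K xP) * LP + cP
  | Act.N => τ * (1 + (d : ℝ) * expo Dmax m pP pU βIA K xP) * LU
  | Act.I => τ * (1 + (d : ℝ) * expo Dmax m pP pU βIA K xP) * LU + cI
      - min Cov (ξ * max 0 (τ * (1 + (d : ℝ) * expo Dmax m pP pU βIA K xP) * LU - ded))

/-- Admissible social state: nonnegative masses summing to `m_d` within each population. -/
def isState (Dmax : ℕ) (m : ℕ → ℝ) (x : ℕ → Act → ℝ) : Prop :=
  ∀ d ∈ Dset Dmax, (∀ a : Act, 0 ≤ x d a) ∧ x d Act.P + x d Act.N + x d Act.I = m d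

/-- Nash equilibrium: any action played by a positive mass of population `d`
minimizes the cost for population `d`. -/
def isNE (Dmax : ℕ) (m : ℕ → ℝ) (pP pU βIA τ LP LU cP cI ξ ded Cov : ℝ)
    (K : ℕ) (x : ℕ → Act → ℝ) : Prop :=
  isState Dmax m x ∧
    ∀ d ∈ Dset Dmax, ∀ a : Act, 0 < x d a →
      ∀ a' : Act, cost Dmax m pP pU βIA τ LP LU cP cI ξ ded Cov K (fun d' => x d' Act.P) d a
        ≤ cost Dmax m pP pU βIA τ LP LU cP cI ξ ded Cov K (fun d' => x d' Act.P) d a'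

/-- Social cost of a planner action `y` (protected masses, remainder unprotected). -/
noncomputable def SC (Dmax : ℕ) (m : ℕ → ℝ) (pP pU βIA τ LP LU cP : ℝ) (K : ℕ)
    (y : ℕ → ℝ) : ℝ :=
  ∑ d ∈ Dset Dmax,
    (y d * (τ * (1 + (d : ℝ) * expo Dmax m pP pU βIA K y) * LP + cP)
      + (m d - y d) * (τ * (1 + (d : ℝ) * expo Dmax m pP pU βIA K y) * LU))

/-- Admissible planner action: `y_d ∈ [0, m_d]` for each `d ∈ 𝒟`. -/
def isPlan (Dmax : ℕ) (m : ℕ → ℝ) (y : ℕ → ℝ) : Prop :=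
  ∀ d ∈ Dset Dmax, 0 ≤ y d ∧ y d ≤ m d

/-!
Each population's infection probability `g·p_P + (1 − g)·p_U` lies in `[0, p_U]`, and `γ`, `λ`
are nonnegative combinations of these, so every admissible state has exposure between `0` and
`e(0)`, the exposure when nobody protects; this `e(0)` is the `e_max` of the statement.
Because `c_P ≥ ΔL·τ`, even a protected node pays at least `τ·L_U`, so `SC(y) ≥ τ·L_U·∑ m_d` for
every plan `y`. At a Nash equilibrium protection is chosen only when it is no dearer than doing
nothing, so `SC(x*) ≤ ∑ m_d·τ(1 + d·e(x*))·L_U ≤ τ·L_U·(∑ m_d + e(0)·∑ d·m_d)`, and dividing the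
two bounds gives the claim.
-/

lemma one_le_of_mem_Dset {Dmax d : ℕ} (hd : d ∈ Dset Dmax) : (1 : ℝ) ≤ d := by
  exact_mod_cast (Finset.mem_Icc.mp hd).1

lemma Dset_nonempty {Dmax : ℕ} (hD : 1 ≤ Dmax) : (Dset Dmax).Nonempty :=
  ⟨1, Finset.mem_Icc.mpr ⟨le_rfl, hD⟩⟩

lemma isState.isPlan_P {Dmax : ℕ} {m : ℕ → ℝ} {x : ℕ → Act → ℝ} (hx : isState Dmax m x) :
    isPlan Dmax m (fun d => x d Act.P) := fun d hd => by
  obtain ⟨hpos, hsum⟩ := hx d hd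
  exact ⟨hpos Act.P, by linarith [hpos Act.N, hpos Act.I]⟩

lemma isPlan.div_mem_Icc {Dmax : ℕ} {m y : ℕ → ℝ} (hy : isPlan Dmax m y) {d : ℕ}
    (hd : d ∈ Dset Dmax) (hmd : 0 < m d) : y d / m d ∈ Set.Icc 0 1 :=
  ⟨div_nonneg (hy d hd).1 hmd.le, (div_le_one hmd).mpr (hy d hd).2⟩

lemma mix_nonneg {g pP pU : ℝ} (hg : g ∈ Set.Icc 0 1) (hpP : 0 ≤ pP) (hp : pP ≤ pU) :
    0 ≤ g * pP + (1 - g) * pU := by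
  nlinarith [hg.1, hg.2]

lemma mix_le {g pP pU : ℝ} (hg : 0 ≤ g) (hp : pP ≤ pU) : g * pP + (1 - g) * pU ≤ pU := by
  nlinarith

section Exposure

variable {Dmax : ℕ} {m : ℕ → ℝ} {pP pU βIA : ℝ} {K : ℕ} {xP : ℕ → ℝ}

lemma wgt_nonneg (hm : ∀ d ∈ Dset Dmax, 0 < m d) {d : ℕ} (hd : d ∈ Dset Dmax) :
    0 ≤ wgt Dmax m d :=
  div_nonneg (by have := hm d hd; positivity)
    (Finset.sum_nonneg fun d hd => by have := hm d hd; positivity)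

lemma sum_wgt_eq_one (hS : ∑ d ∈ Dset Dmax, (d : ℝ) * m d ≠ 0) :
    ∑ d ∈ Dset Dmax, wgt Dmax m d = 1 := by
  simp only [wgt]
  rw [← Finset.sum_div, div_self hS]

lemma gam_nonneg (hm : ∀ d ∈ Dset Dmax, 0 < m d) (hβ : 0 ≤ βIA) (hpP : 0 ≤ pP) (hp : pP ≤ pU)
    (hx : isPlan Dmax m xP) : 0 ≤ gam Dmax m pP pU βIA xP :=
  mul_nonneg hβ <| Finset.sum_nonneg fun d hd =>
    mul_nonneg (wgt_nonneg hm hd) (mix_nonneg (hx.div_mem_Icc hd (hm d hd)) hpP hp)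

lemma lamb_nonneg (hm : ∀ d ∈ Dset Dmax, 0 < m d) (hβ : 0 ≤ βIA) (hpP : 0 ≤ pP) (hp : pP ≤ pU)
    (hx : isPlan Dmax m xP) : 0 ≤ lamb Dmax m pP pU βIA xP :=
  mul_nonneg hβ <| Finset.sum_nonneg fun d hd =>
    mul_nonneg (mul_nonneg (wgt_nonneg hm hd) (sub_nonneg.mpr (one_le_of_mem_Dset hd)))
      (mix_nonneg (hx.div_mem_Icc hd (hm d hd)) hpP hp)

lemma expo_nonneg (hm : ∀ d ∈ Dset Dmax, 0 < m d) (hβ : 0 ≤ βIA) (hpP : 0 ≤ pP) (hp : pP ≤ pU)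
    (hx : isPlan Dmax m xP) : 0 ≤ expo Dmax m pP pU βIA K xP :=
  mul_nonneg (gam_nonneg hm hβ hpP hp hx) <| Finset.sum_nonneg fun k _ =>
    pow_nonneg (lamb_nonneg hm hβ hpP hp hx) k

lemma gam_le_gam_zero (hm : ∀ d ∈ Dset Dmax, 0 < m d) (hβ : 0 ≤ βIA) (hp : pP ≤ pU)
    (hx : isPlan Dmax m xP) : gam Dmax m pP pU βIA xP ≤ gam Dmax m pP pU βIA 0 := by
  refine mul_le_mul_of_nonneg_left (Finset.sum_le_sum fun d hd =>
    mul_le_mul_of_nonneg_left ?_ (wgt_nonneg hm hd)) hβ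
  simpa using mix_le (hx.div_mem_Icc hd (hm d hd)).1 hp

lemma lamb_le_lamb_zero (hm : ∀ d ∈ Dset Dmax, 0 < m d) (hβ : 0 ≤ βIA) (hp : pP ≤ pU)
    (hx : isPlan Dmax m xP) : lamb Dmax m pP pU βIA xP ≤ lamb Dmax m pP pU βIA 0 := by
  refine mul_le_mul_of_nonneg_left (Finset.sum_le_sum fun d hd => mul_le_mul_of_nonneg_left ?_
    (mul_nonneg (wgt_nonneg hm hd) (sub_nonneg.mpr (one_le_of_mem_Dset hd)))) hβ
  simpa using mix_le (hx.div_mem_Icc hd (hm d hd)).1 hp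

lemma expo_le_expo_zero (hm : ∀ d ∈ Dset Dmax, 0 < m d) (hβ : 0 ≤ βIA) (hpP : 0 ≤ pP)
    (hp : pP ≤ pU) (hx : isPlan Dmax m xP) :
    expo Dmax m pP pU βIA K xP ≤ expo Dmax m pP pU βIA K 0 := by
  have hlamb := lamb_nonneg hm hβ hpP hp hx
  unfold expo
  gcongr
  · exact (gam_nonneg hm hβ hpP hp hx).trans (gam_le_gam_zero hm hβ hp hx)
  · exact gam_le_gam_zero hm hβ hp hx
  · exact lamb_le_lamb_zero hm hβ hp hx

lemma gam_zero (hS : ∑ d ∈ Dset Dmax, (d : ℝ) * m d ≠ 0) :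
    gam Dmax m pP pU βIA 0 = βIA * pU := by
  simp only [gam, Pi.zero_apply, zero_div, zero_mul, sub_zero, one_mul, zero_add,
    ← Finset.sum_mul, sum_wgt_eq_one hS]

lemma lamb_zero :
    lamb Dmax m pP pU βIA 0 = βIA * pU * ((∑ d ∈ Dset Dmax, (d : ℝ) * ((d : ℝ) - 1) * m d)
      / ∑ d ∈ Dset Dmax, (d : ℝ) * m d) := by
  simp only [lamb, wgt, Pi.zero_apply, zero_div, zero_mul, sub_zero, one_mul, zero_add]
  rw [Finset.sum_div, Finset.mul_sum, Finset.mul_sum]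
  exact Finset.sum_congr rfl fun d _ => by ring

lemma expo_zero (hS : ∑ d ∈ Dset Dmax, (d : ℝ) * m d ≠ 0) :
    expo Dmax m pP pU βIA K 0 = βIA * pU * ∑ k ∈ Finset.range K,
      (βIA * pU * ((∑ d ∈ Dset Dmax, (d : ℝ) * ((d : ℝ) - 1) * m d)
        / ∑ d ∈ Dset Dmax, (d : ℝ) * m d)) ^ k := by
  rw [expo, gam_zero hS, lamb_zero]

end Exposure

section SocialCost

variable {Dmax : ℕ} {m : ℕ → ℝ} {pP pU βIA τ LP LU cP : ℝ} {K : ℕ}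

lemma mul_sum_le_SC (hτ : 0 ≤ τ) (hLP : 0 ≤ LP) (hLU : 0 ≤ LU) (hcP : (LU - LP) * τ ≤ cP)
    {y : ℕ → ℝ} (hy : isPlan Dmax m y) (he : 0 ≤ expo Dmax m pP pU βIA K y) :
    τ * LU * ∑ d ∈ Dset Dmax, m d ≤ SC Dmax m pP pU βIA τ LP LU cP K y := by
  rw [Finset.mul_sum]
  refine Finset.sum_le_sum fun d hd => ?_
  obtain ⟨hy0, hym⟩ := hy d hd
  set C := τ * (1 + (d : ℝ) * expo Dmax m pP pU βIA K y)
  have hC : τ ≤ C := le_mul_of_one_le_right hτ (le_add_of_nonneg_right (by positivity))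
  have hCP : τ * LU ≤ C * LP + cP := by nlinarith
  have hCN : τ * LU ≤ C * LU := mul_le_mul_of_nonneg_right hC hLU
  nlinarith [mul_le_mul_of_nonneg_left hCP hy0, mul_le_mul_of_nonneg_left hCN (sub_nonneg.mpr hym)]

lemma SC_le_of_isNE {cI ξ ded Cov : ℝ} {x : ℕ → Act → ℝ}
    (hx : isNE Dmax m pP pU βIA τ LP LU cP cI ξ ded Cov K x) :
    SC Dmax m pP pU βIA τ LP LU cP K (fun d => x d Act.P) ≤ τ * LU *
      (∑ d ∈ Dset Dmax, m d
        + expo Dmax m pP pU βIA K (fun d => x d Act.P) * ∑ d ∈ Dset Dmax, (d : ℝ) * m d) := by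
  set e := expo Dmax m pP pU βIA K (fun d => x d Act.P)
  calc SC Dmax m pP pU βIA τ LP LU cP K (fun d => x d Act.P)
      ≤ ∑ d ∈ Dset Dmax, m d * (τ * (1 + (d : ℝ) * e) * LU) := by
        refine Finset.sum_le_sum fun d hd => ?_
        have hxP := (hx.1 d hd).1 Act.P
        have hPN : x d Act.P * (τ * (1 + (d : ℝ) * e) * LP + cP)
            ≤ x d Act.P * (τ * (1 + (d : ℝ) * e) * LU) := by
          rcases hxP.eq_or_lt with h | h
          · simp [← h]
          · exact mul_le_mul_of_nonneg_left (hx.2 d hd Act.P h Act.N) hxP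
        linarith
    _ = τ * LU * (∑ d ∈ Dset Dmax, m d + e * ∑ d ∈ Dset Dmax, (d : ℝ) * m d) := by
        rw [Finset.mul_sum, ← Finset.sum_add_distrib, Finset.mul_sum]
        exact Finset.sum_congr rfl fun d _ => by ring

end SocialCost

lemma div_le_one_add_of_le_of_le {a b c s t e : ℝ} (hc : 0 < c) (hs : 0 < s) (ht : 0 ≤ t)
    (he : 0 ≤ e) (ha : a ≤ c * (s + e * t)) (hb : c * s ≤ b) : a / b ≤ 1 + t / s * e := calc
  a / b ≤ c * (s + e * t) / (c * s) := div_le_div₀ (by positivity) ha (by positivity) hb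
  _ = 1 + t / s * e := by field_simp

theorem price_of_anarchy_bound_general (Dmax : ℕ) (hD : 1 ≤ Dmax)
    (m : ℕ → ℝ) (hm : ∀ d ∈ Dset Dmax, 0 < m d)
    (pP pU βIA τ LP LU cP cI ξ ded Cov : ℝ) (K : ℕ)
    (hpP : 0 ≤ pP) (hp : pP < pU)
    (hβ0 : 0 < βIA)
    (hτ0 : 0 < τ)
    (hLP : 0 < LP) (hL : LP < (1 - ξ) * LU)
    (hξ1 : ξ ≤ 1)
    (hcP : (LU - LP) * τ ≤ cP)
    (x : ℕ → Act → ℝ)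
    (hNE : isNE Dmax m pP pU βIA τ LP LU cP cI ξ ded Cov K x)
    (ystar : ℕ → ℝ) (hplan : isPlan Dmax m ystar) :
    SC Dmax m pP pU βIA τ LP LU cP K (fun d => x d Act.P)
        / SC Dmax m pP pU βIA τ LP LU cP K ystar
      ≤ 1 + ((∑ d ∈ Dset Dmax, (d : ℝ) * m d) / (∑ d ∈ Dset Dmax, m d)) *
          (βIA * pU * ∑ k ∈ Finset.range K,
            ((βIA * pU / ((∑ d ∈ Dset Dmax, (d : ℝ) * m d) / (∑ d ∈ Dset Dmax, m d)))
              * ((∑ d ∈ Dset Dmax, (d : ℝ) * ((d : ℝ) - 1) * m d)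
                  / (∑ d ∈ Dset Dmax, m d))) ^ k) := by
  have hLU : 0 < LU := by nlinarith
  set S0 := ∑ d ∈ Dset Dmax, m d
  set S1 := ∑ d ∈ Dset Dmax, (d : ℝ) * m d
  set S2 := ∑ d ∈ Dset Dmax, (d : ℝ) * ((d : ℝ) - 1) * m d
  have hS0 : 0 < S0 := Finset.sum_pos hm (Dset_nonempty hD)
  have hS1 : 0 < S1 := Finset.sum_pos
    (fun d hd => mul_pos (one_pos.trans_le (one_le_of_mem_Dset hd)) (hm d hd)) (Dset_nonempty hD)
  have hratio : βIA * pU / (S1 / S0) * (S2 / S0) = βIA * pU * (S2 / S1) := by field_simp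
  rw [hratio, ← expo_zero (pP := pP) hS1.ne']
  have hxP := hNE.1.isPlan_P
  have hexpo := expo_le_expo_zero (K := K) hm hβ0.le hpP hp.le hxP
  have hupper : SC Dmax m pP pU βIA τ LP LU cP K (fun d => x d Act.P)
      ≤ τ * LU * (S0 + expo Dmax m pP pU βIA K 0 * S1) :=
    (SC_le_of_isNE hNE).trans (by gcongr)
  have hlower : τ * LU * S0 ≤ SC Dmax m pP pU βIA τ LP LU cP K ystar :=
    mul_sum_le_SC hτ0.le hLP.le hLU.le hcP hplan (expo_nonneg hm hβ0.le hpP hp.le hplan)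
  exact div_le_one_add_of_le_of_le (by positivity) hS0 hS1.le
    ((expo_nonneg hm hβ0.le hpP hp.le hxP).trans hexpo) hupper hlower

/-- price of anarchy bound. If `c_P ≥ ΔL·τ`, then for any Nash
equilibrium `x*` and the social optimum `y*`,
`SC(x*)/SC(y*) ≤ 1 + d_avg · e_max`, where `d_avg = ∑ d·m_d / ∑ m_d` and
`e_max = β_IA p_U ∑_{k=0}^{K−1} ((β_IA p_U/d_avg)·∑ d(d−1)m_d / ∑ m_d)^k`. -/
theorem price_of_anarchy_bound (Dmax : ℕ) (hD : 1 ≤ Dmax)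
    (m : ℕ → ℝ) (hm : ∀ d ∈ Dset Dmax, 0 < m d)
    (pP pU βIA τ LP LU cP cI ξ ded Cov : ℝ) (K : ℕ)
    (hpP : 0 ≤ pP) (hp : pP < pU) (hpU : pU ≤ 1)
    (hβ0 : 0 < βIA) (hβ1 : βIA ≤ 1) (hK : 1 ≤ K)
    (hτ0 : 0 < τ) (hτ1 : τ ≤ 1)
    (hLP : 0 < LP) (hL : LP < (1 - ξ) * LU)
    (hξ0 : 0 < ξ) (hξ1 : ξ ≤ 1) (hCov : 0 ≤ Cov) (hded : 0 ≤ ded)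
    (hc : cI + ded < cP)
    (hcP : (LU - LP) * τ ≤ cP)
    (x : ℕ → Act → ℝ)
    (hNE : isNE Dmax m pP pU βIA τ LP LU cP cI ξ ded Cov K x)
    (ystar : ℕ → ℝ) (hplan : isPlan Dmax m ystar)
    (hmin : ∀ y : ℕ → ℝ, isPlan Dmax m y →
      SC Dmax m pP pU βIA τ LP LU cP K ystar ≤ SC Dmax m pP pU βIA τ LP LU cP K y) :
    SC Dmax m pP pU βIA τ LP LU cP K (fun d => x d Act.P)
        / SC Dmax m pP pU βIA τ LP LU cP K ystar
      ≤ 1 + ((∑ d ∈ Dset Dmax, (d : ℝ) * m d) / (∑ d ∈ Dset Dmax, m d)) *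
          (βIA * pU * ∑ k ∈ Finset.range K,
            ((βIA * pU / ((∑ d ∈ Dset Dmax, (d : ℝ) * m d) / (∑ d ∈ Dset Dmax, m d)))
              * ((∑ d ∈ Dset Dmax, (d : ℝ) * ((d : ℝ) - 1) * m d)
                  / (∑ d ∈ Dset Dmax, m d))) ^ k) :=
  price_of_anarchy_bound_general Dmax hD m hm pP pU βIA τ LP LU cP cI ξ ded Cov K hpP hp hβ0 hτ0 hLP
    hL hξ1 hcP x hNE ystar hplan
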